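/- arXiv:2310.18832 — 4 statements merged into one kernel-verified Lean document; each statement's English description precedes it below -/
import Mathlib

section
/- Let H be a finite hypothesis set with zero-one losses ℓ(h,i) ∈ {0,1} on n points, and W ⊆ Δₙ compact convex. Then inf over P ∈ Δ_H of sup over w ∈ W of ∑ᵢ wᵢ 𝔼_{h∼P}[ℓ(h,i)] < 1/2 if and only if for every w ∈ W there exists h ∈ H with ∑ᵢ wᵢ ℓ(h,i) < 1/2. -/
/-!
Write `x_w := (∑ i, w i * ℓ h i)_h` for the vector of errors of the hypotheses under the weighting
`w`; the game pays `P ⬝ᵥ x_w`, and `C := {x_w | w ∈ W}` is compact and convex. If every point of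
`C` has a coordinate below `1/2`, then `C` misses the closed orthant `{y | 1/2 ≤ y}`, and
Hahn–Banach separates them strictly. The separating functional is bounded below on the orthant, so
its coefficients are nonnegative; normalised, they form a mixture `P` whose loss on all of `C` stays
below `1/2`. Conversely, if `P ⬝ᵥ x < 1/2` for a probability vector `P`, some coordinate of `x` is
below `1/2`.
-/

open Matrix Set Filter

theorem LinearMap.apply_ite_nonneg_of_bddBelow_image_Ici {ι : Type*} [DecidableEq ι]
    (f : (ι → ℝ) →ₗ[ℝ] ℝ) {y : ι → ℝ} (hf : BddBelow (f '' Ici y)) (i : ι) :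
    0 ≤ f fun j => if i = j then 1 else 0 := by
  by_contra! hneg
  obtain ⟨m, hm⟩ := hf
  set e : ι → ℝ := fun j => if i = j then 1 else 0
  have he : 0 ≤ e := fun j => by positivity
  have htend : Tendsto (fun t : ℝ => f y + t * f e) atTop atBot :=
    tendsto_atBot_add_const_left _ _ (tendsto_id.atTop_mul_const_of_neg hneg)
  obtain ⟨t, hlt, ht⟩ := ((htend.eventually_lt_atBot m).and (eventually_ge_atTop 0)).exists
  refine hlt.not_ge (hm ⟨y + t • e, le_add_of_nonneg_right (smul_nonneg ht he), ?_⟩)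
  rw [map_add, map_smul, smul_eq_mul]

section StdSimplex

variable {ι : Type*} [Fintype ι]

theorem exists_lt_of_mem_stdSimplex_of_dotProduct_lt {P x : ι → ℝ} {c : ℝ}
    (hP : P ∈ stdSimplex ℝ ι) (h : P ⬝ᵥ x < c) : ∃ i, x i < c := by
  have : ∑ i, P i * x i < ∑ i, P i * c := by rwa [← Finset.sum_mul, hP.2, one_mul]
  obtain ⟨i, -, hi⟩ := Finset.exists_lt_of_sum_lt this
  exact ⟨i, lt_of_mul_lt_mul_left hi (hP.1 i)⟩

theorem exists_mem_stdSimplex_forall_dotProduct_lt {C : Set (ι → ℝ)} (hCne : C.Nonempty)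
    (hCc : IsCompact C) (hCconv : Convex ℝ C) {c : ℝ} (hC : ∀ x ∈ C, ∃ i, x i < c) :
    ∃ P ∈ stdSimplex ℝ ι, ∃ u < c, ∀ x ∈ C, P ⬝ᵥ x < u := by
  classical
  have hdisj : Disjoint C (Ici fun _ => c) := disjoint_left.2 fun x hx hxc =>
    let ⟨i, hi⟩ := hC x hx; (hxc i).not_gt hi
  obtain ⟨f, u, v, hfu, huv, hfv⟩ :=
    geometric_hahn_banach_compact_closed hCconv hCc (convex_Ici _) isClosed_Ici hdisj
  set a : ι → ℝ := fun i => f fun j => if i = j then 1 else 0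
  have hfa : ∀ x, f x = a ⬝ᵥ x := fun x => by
    rw [dotProduct_comm]; exact f.toLinearMap.pi_apply_eq_sum_univ x
  have ha : ∀ i, 0 ≤ a i := f.toLinearMap.apply_ite_nonneg_of_bddBelow_image_Ici
    ⟨v, forall_mem_image.2 fun y hy => (hfv y hy).le⟩
  have hvc : v < c * ∑ i, a i := by
    have hfc : f (fun _ => c) = c * ∑ i, a i := by
      rw [hfa, dotProduct, Finset.mul_sum]; simp only [mul_comm]
    exact hfc ▸ hfv _ self_mem_Ici
  have hs : 0 < ∑ i, a i := by
    refine (Finset.sum_nonneg fun i _ => ha i).lt_of_ne fun hs0 => ?_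
    obtain ⟨x₀, hx₀⟩ := hCne
    have ha0 : a = 0 := funext fun i =>
      (Finset.sum_eq_zero_iff_of_nonneg fun i _ => ha i).1 hs0.symm i (Finset.mem_univ i)
    have := (hfu x₀ hx₀).trans (huv.trans hvc)
    rw [hfa, ← hs0, ha0, zero_dotProduct, mul_zero] at this
    exact this.false
  refine ⟨(∑ i, a i)⁻¹ • a, ⟨fun i => mul_nonneg (inv_nonneg.2 hs.le) (ha i), ?_⟩,
    (∑ i, a i)⁻¹ * u, ?_, fun x hx => ?_⟩
  · simp only [Pi.smul_apply, smul_eq_mul, ← Finset.mul_sum, inv_mul_cancel₀ hs.ne']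
  · rw [inv_mul_lt_iff₀ hs, mul_comm]
    exact huv.trans hvc
  · rw [smul_dotProduct, smul_eq_mul, ← hfa]
    exact mul_lt_mul_of_pos_left (hfu x hx) (inv_pos.2 hs)

theorem sInf_sSup_dotProduct_lt_iff [Nonempty ι] {C : Set (ι → ℝ)} (hCne : C.Nonempty)
    (hCc : IsCompact C) (hCconv : Convex ℝ C) (c : ℝ) :
    sInf ((fun P => sSup ((P ⬝ᵥ ·) '' C)) '' stdSimplex ℝ ι) < c ↔ ∀ x ∈ C, ∃ i, x i < c := by
  have hbdd (P : ι → ℝ) : BddAbove ((P ⬝ᵥ ·) '' C) :=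
    (hCc.image (continuous_const.dotProduct continuous_id)).bddAbove
  constructor
  · intro hlt x hx
    obtain ⟨_, ⟨P, hP, rfl⟩, hPc⟩ :=
      exists_lt_of_csInf_lt ((nonempty_coe_sort.1 inferInstance).image _) hlt
    exact exists_lt_of_mem_stdSimplex_of_dotProduct_lt hP
      ((le_csSup (hbdd P) (mem_image_of_mem _ hx)).trans_lt hPc)
  · intro hC
    obtain ⟨P, hP, u, huc, hPu⟩ := exists_mem_stdSimplex_forall_dotProduct_lt hCne hCc hCconv hC
    obtain ⟨x₀, hx₀⟩ := hCne
    have hbddBelow : BddBelow ((fun P => sSup ((P ⬝ᵥ ·) '' C)) '' stdSimplex ℝ ι) := by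
      obtain ⟨m, hm⟩ := (isCompact_stdSimplex ℝ ι).bddBelow_image
        (continuous_id.dotProduct continuous_const (B := fun _ => x₀)).continuousOn
      exact ⟨m, forall_mem_image.2 fun Q hQ =>
        (hm (mem_image_of_mem _ hQ)).trans (le_csSup (hbdd Q) (mem_image_of_mem _ hx₀))⟩
    calc _ ≤ sSup ((P ⬝ᵥ ·) '' C) := csInf_le hbddBelow (mem_image_of_mem _ hP)
      _ ≤ u := csSup_le ⟨_, mem_image_of_mem _ hx₀⟩ (forall_mem_image.2 fun x hx => (hPu x hx).le)
      _ < c := huc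

end StdSimplex

theorem stmt_3_general {H : Type*} [Fintype H] [Nonempty H] (n : ℕ)
    (ℓ : H → Fin n → ℝ)
    (W : Set (Fin n → ℝ)) (hWne : W.Nonempty) (hWcpt : IsCompact W)
    (hWconv : Convex ℝ W) :
    sInf ((fun P : H → ℝ =>
        sSup ((fun w : Fin n → ℝ => ∑ i, w i * ∑ h, P h * ℓ h i) '' W)) ''
      {P : H → ℝ | (∀ h, 0 ≤ P h) ∧ (∑ h, P h) = 1}) < 1/2
    ↔ ∀ w ∈ W, ∃ h : H, ∑ i, w i * ℓ h i < 1/2 := by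
  have hgame (P : H → ℝ) (w : Fin n → ℝ) :
      ∑ i, w i * ∑ h, P h * ℓ h i = P ⬝ᵥ (of ℓ *ᵥ w) := by
    rw [dotProduct_mulVec, dotProduct_comm]; rfl
  have herr (w : Fin n → ℝ) (h : H) : ∑ i, w i * ℓ h i = (of ℓ *ᵥ w) h :=
    dotProduct_comm w (ℓ h)
  have key := sInf_sSup_dotProduct_lt_iff (hWne.image (of ℓ *ᵥ ·))
    (hWcpt.image (continuous_const.matrix_mulVec continuous_id))
    (hWconv.linear_image (mulVecLin (of ℓ))) (1/2)
  simp only [image_image, forall_mem_image] at key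
  simp only [hgame, herr]
  exact key

/-- Boostability / weak-learning equivalence: the ensemble RAI game value is below 1/2
iff for every allowed weighting some hypothesis has weighted error below 1/2. -/
theorem stmt_3 {H : Type*} [Fintype H] [Nonempty H] (n : ℕ) (hn : 0 < n)
    (ℓ : H → Fin n → ℝ) (hℓ : ∀ h i, ℓ h i = 0 ∨ ℓ h i = 1)
    (W : Set (Fin n → ℝ)) (hWne : W.Nonempty) (hWcpt : IsCompact W)
    (hWconv : Convex ℝ W)
    (hWΔ : ∀ w ∈ W, (∀ i, 0 ≤ w i) ∧ (∑ i, w i) = 1) :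
    sInf ((fun P : H → ℝ =>
        sSup ((fun w : Fin n → ℝ => ∑ i, w i * ∑ h, P h * ℓ h i) '' W)) ''
      {P : H → ℝ | (∀ h, 0 ≤ P h) ∧ (∑ h, P h) = 1}) < 1/2
    ↔ ∀ w ∈ W, ∃ h : H, ∑ i, w i * ℓ h i < 1/2 :=
  stmt_3_general n ℓ W hWne hWcpt hWconv
end

section
/- Let 𝒴 be a finite label set, n data points with labels yᵢ, P a probability distribution over hypotheses h : [n] → 𝒴, and ℓ : 𝒴 × 𝒴 → [0,∞) a nonnegative loss. Define y_P(i) = argmax_{y∈𝒴} P[h(i) = y] and γ_P = 1 / min_{i∈[n]} max_{y∈𝒴} P[h(i) = y]. Then for any nonempty W ⊆ Δₙ, sup_{w∈W} ∑ᵢ wᵢ ℓ(y_P(i), yᵢ) ≤ γ_P · sup_{w∈W} ∑ᵢ wᵢ 𝔼_{h∼P}[ℓ(h(i), yᵢ)]. -/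
/-!
At a point `i`, the expected loss `𝔼_{h∼P}[ℓ(h(i), yᵢ)]` is at least the contribution of the
hypotheses voting for `y_P(i)`, namely `P[h(i) = y_P(i)] · ℓ(y_P(i), yᵢ) ≥ ℓ(y_P(i), yᵢ) / γ_P`.
This pointwise bound survives weighting by any `w ∈ Δₙ` and taking suprema over `W`.
-/

open Finset Set

theorem sum_ite_eq_mul_le_sum_mul {H Y : Type*} [Fintype H] [DecidableEq Y]
    (P : H → ℝ) (hP : ∀ h, 0 ≤ P h) (X : H → Y) (φ : Y → ℝ) (hφ : ∀ y, 0 ≤ φ y) (y : Y) :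
    (∑ h, if X h = y then P h else 0) * φ y ≤ ∑ h, P h * φ (X h) := by
  rw [Finset.sum_mul]
  refine Finset.sum_le_sum fun h _ => ?_
  split_ifs with hXh
  · rw [hXh]
  · rw [zero_mul]
    exact mul_nonneg (hP h) (hφ _)

/- Holds also for empty `W`, where both suprema take the junk value `0`. -/
theorem Real.sSup_image_le_mul_sSup_image {α : Type*} {W : Set α} {f g : α → ℝ} {c : ℝ}
    (hc : 0 ≤ c) (hg : ∀ w ∈ W, 0 ≤ g w) (hbdd : BddAbove (g '' W))
    (hfg : ∀ w ∈ W, f w ≤ c * g w) :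
    sSup (f '' W) ≤ c * sSup (g '' W) :=
  Real.sSup_le
    (forall_mem_image.2 fun w hw => (hfg w hw).trans <|
      mul_le_mul_of_nonneg_left (le_csSup hbdd (mem_image_of_mem g hw)) hc)
    (mul_nonneg hc (Real.sSup_nonneg (forall_mem_image.2 hg)))

theorem bddAbove_image_of_subset_stdSimplex {ι : Type*} [Fintype ι] {W : Set (ι → ℝ)}
    (hW : W ⊆ stdSimplex ℝ ι) {F : (ι → ℝ) → ℝ} (hF : Continuous F) :
    BddAbove (F '' W) :=
  ((isCompact_stdSimplex ℝ ι).bddAbove_image hF.continuousOn).mono (image_mono hW)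

theorem weightedSum_le_mul_weightedSum {ι : Type*} [Fintype ι] {w a b : ι → ℝ} {c : ℝ}
    (hw : ∀ i, 0 ≤ w i) (hab : ∀ i, a i ≤ c * b i) :
    ∑ i, w i * a i ≤ c * ∑ i, w i * b i := by
  rw [Finset.mul_sum]
  refine Finset.sum_le_sum fun i _ => ?_
  rw [mul_left_comm]
  exact mul_le_mul_of_nonneg_left (hab i) (hw i)

theorem setOf_exists_mem_eq_eq_image {α β : Type*} (W : Set α) (F : α → β) :
    {s | ∃ w ∈ W, s = F w} = F '' W := by
  ext s
  exact exists_congr fun _ => and_congr_right fun _ => eq_comm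

theorem stmt_4_general {Y : Type*} [Fintype Y] [DecidableEq Y] (n : ℕ) (hn : 0 < n)
    (yv : Fin n → Y) (P : (Fin n → Y) → ℝ)
    (hPpos : ∀ h, 0 ≤ P h)
    (ℓ : Y → Y → ℝ) (hℓ : ∀ y' y, 0 ≤ ℓ y' y)
    -- q i y = P[h(i) = y]
    (q : Fin n → Y → ℝ) (hq : ∀ i y, q i y = ∑ h, if h i = y then P h else 0)
    (yP : Fin n → Y)
    (hpos : ∀ i, 0 < q i (yP i))
    (γ : ℝ)
    (hγ : γ = 1 / (Finset.univ.inf' (Finset.univ_nonempty_iff.mpr ⟨⟨0, hn⟩⟩)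
        (fun i => q i (yP i))))
    (W : Set (Fin n → ℝ))
    (hWΔ : ∀ w ∈ W, (∀ i, 0 ≤ w i) ∧ (∑ i, w i) = 1) :
    sSup {s : ℝ | ∃ w ∈ W, s = ∑ i, w i * ℓ (yP i) (yv i)}
      ≤ γ * sSup {s : ℝ | ∃ w ∈ W, s = ∑ i, w i * ∑ h, P h * ℓ (h i) (yv i)} := by
  set m := Finset.univ.inf' (Finset.univ_nonempty_iff.mpr ⟨⟨0, hn⟩⟩) fun i => q i (yP i)
  have hm : 0 < m := (Finset.lt_inf'_iff _).2 fun i _ => hpos i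
  set E : Fin n → ℝ := fun i => ∑ h, P h * ℓ (h i) (yv i)
  have hE : ∀ i, 0 ≤ E i := fun i => Finset.sum_nonneg fun h _ => mul_nonneg (hPpos h) (hℓ _ _)
  have hloss : ∀ i, ℓ (yP i) (yv i) ≤ γ * E i := fun i => by
    have hvote : m * ℓ (yP i) (yv i) ≤ E i := calc
      m * ℓ (yP i) (yv i) ≤ q i (yP i) * ℓ (yP i) (yv i) :=
        mul_le_mul_of_nonneg_right (Finset.inf'_le _ (Finset.mem_univ i)) (hℓ _ _)
      _ ≤ E i := by
        rw [hq]
        exact sum_ite_eq_mul_le_sum_mul P hPpos (fun h => h i) (ℓ · (yv i)) (hℓ · _) (yP i)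
    rw [hγ, one_div_mul_eq_div]
    exact (le_div_iff₀' hm).2 hvote
  rw [setOf_exists_mem_eq_eq_image, setOf_exists_mem_eq_eq_image]
  exact Real.sSup_image_le_mul_sSup_image (by rw [hγ]; positivity)
    (fun w hw => Finset.sum_nonneg fun i _ => mul_nonneg ((hWΔ w hw).1 i) (hE i))
    (bddAbove_image_of_subset_stdSimplex hWΔ (by fun_prop))
    (fun w hw => weightedSum_le_mul_weightedSum (hWΔ w hw).1 hloss)

/-- The deterministic (plurality-vote) ensemble RAI risk is bounded by `γ_P` times the
randomized ensemble RAI risk. -/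
theorem stmt_4 {Y : Type*} [Fintype Y] [Nonempty Y] [DecidableEq Y] (n : ℕ) (hn : 0 < n)
    (yv : Fin n → Y) (P : (Fin n → Y) → ℝ)
    (hPpos : ∀ h, 0 ≤ P h) (hPsum : (∑ h, P h) = 1)
    (ℓ : Y → Y → ℝ) (hℓ : ∀ y' y, 0 ≤ ℓ y' y)
    -- q i y = P[h(i) = y]
    (q : Fin n → Y → ℝ) (hq : ∀ i y, q i y = ∑ h, if h i = y then P h else 0)
    -- yP is a plurality-vote selection (ties broken arbitrarily)
    (yP : Fin n → Y) (hyP : ∀ i y, q i y ≤ q i (yP i))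
    (hpos : ∀ i, 0 < q i (yP i))
    (γ : ℝ)
    (hγ : γ = 1 / (Finset.univ.inf' (Finset.univ_nonempty_iff.mpr ⟨⟨0, hn⟩⟩)
        (fun i => q i (yP i))))
    (W : Set (Fin n → ℝ)) (hWne : W.Nonempty)
    (hWΔ : ∀ w ∈ W, (∀ i, 0 ≤ w i) ∧ (∑ i, w i) = 1) :
    sSup {s : ℝ | ∃ w ∈ W, s = ∑ i, w i * ℓ (yP i) (yv i)}
      ≤ γ * sSup {s : ℝ | ∃ w ∈ W, s = ∑ i, w i * ∑ h, P h * ℓ (h i) (yv i)} :=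
  stmt_4_general n hn yv P hPpos ℓ hℓ q hq yP hpos γ hγ W hWΔ
end

section
/- Let ℓ ∈ ℝⁿ and α ∈ (0,1] with k = αn a positive integer. Then the average of the k largest entries of ℓ equals inf over η ∈ ℝ of (η + (1/(αn)) ∑ᵢ max(ℓᵢ − η, 0)), and the infimum is attained at η equal to the k-th largest entry of ℓ. -/
/-!
For any `k`-element set `s` and any threshold `η`, the sum of `(ℓᵢ - η)₊` over all indices dominates
`∑_{i ∈ s} (ℓᵢ - η) = ∑_{i ∈ s} ℓᵢ - kη`, so every value of the Rockafellar–Uryasev objective is at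
least the mean of `ℓ` over `s`. If `η` separates `s` from its complement (as the `k`-th largest
entry does for the indices of the `k` largest entries), the domination is an equality, so the
bound is attained.
-/

open Finset

section RockafellarUryasev

variable {ι : Type*} {s : Finset ι} {k : ℕ}

theorem mean_eq_add_sum_sub (hsk : #s = k) (hk : 0 < k) (f : ι → ℝ) (η : ℝ) :
    (1 / k : ℝ) * ∑ i ∈ s, f i = η + (1 / k) * ∑ i ∈ s, (f i - η) := by
  rw [sum_sub_distrib, sum_const, hsk, nsmul_eq_mul]
  field_simp
  ring

variable [Fintype ι]

theorem sum_sub_le_sum_max_sub_zero (s : Finset ι) (f : ι → ℝ) (η : ℝ) :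
    ∑ i ∈ s, (f i - η) ≤ ∑ i, max (f i - η) 0 :=
  calc ∑ i ∈ s, (f i - η) ≤ ∑ i ∈ s, max (f i - η) 0 := sum_le_sum fun _ _ => le_max_left _ _
    _ ≤ ∑ i, max (f i - η) 0 :=
      sum_le_sum_of_subset_of_nonneg (subset_univ s) fun _ _ _ => le_max_right _ _

theorem sum_max_sub_zero_eq_of_separates {f : ι → ℝ} {η : ℝ}
    (hs : ∀ i ∈ s, η ≤ f i) (hsc : ∀ i ∉ s, f i ≤ η) :
    ∑ i, max (f i - η) 0 = ∑ i ∈ s, (f i - η) := by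
  classical
  rw [← sum_add_sum_compl s, sum_congr rfl fun i hi => max_eq_left (sub_nonneg.2 (hs i hi)),
    sum_eq_zero fun i hi => max_eq_right (sub_nonpos.2 (hsc i (mem_compl.1 hi))), add_zero]

theorem mean_le_add_sum_max_sub_zero (hsk : #s = k) (hk : 0 < k) (f : ι → ℝ) (η : ℝ) :
    (1 / k : ℝ) * ∑ i ∈ s, f i ≤ η + (1 / k) * ∑ i, max (f i - η) 0 := by
  rw [mean_eq_add_sum_sub hsk hk f η]
  gcongr
  exact sum_sub_le_sum_max_sub_zero s f η

theorem mean_eq_add_sum_max_sub_zero_of_separates (hsk : #s = k) (hk : 0 < k) {f : ι → ℝ}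
    {η : ℝ} (hs : ∀ i ∈ s, η ≤ f i) (hsc : ∀ i ∉ s, f i ≤ η) :
    (1 / k : ℝ) * ∑ i ∈ s, f i = η + (1 / k) * ∑ i, max (f i - η) 0 := by
  rw [sum_max_sub_zero_eq_of_separates hs hsc, mean_eq_add_sum_sub hsk hk f η]

theorem isLeast_mean_of_separates (hsk : #s = k) (hk : 0 < k) {f : ι → ℝ} {η₀ : ℝ}
    (hs : ∀ i ∈ s, η₀ ≤ f i) (hsc : ∀ i ∉ s, f i ≤ η₀) :
    IsLeast {x : ℝ | ∃ η : ℝ, x = η + (1 / k) * ∑ i, max (f i - η) 0}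
      ((1 / k : ℝ) * ∑ i ∈ s, f i) :=
  ⟨⟨η₀, mean_eq_add_sum_max_sub_zero_of_separates hsk hk hs hsc⟩,
    by rintro x ⟨η, rfl⟩; exact mean_le_add_sum_max_sub_zero hsk hk f η⟩

end RockafellarUryasev

/-- Rockafellar–Uryasev duality for empirical CVaR: the average of the `k = αn` largest
losses equals `inf_η (η + (1/(αn)) Σᵢ (ℓᵢ − η)₊)`, attained at the k-th largest entry. -/
theorem stmt_7 (n k : ℕ) (hk : 0 < k) (hkn : k ≤ n) (α : ℝ)
    (hαk : (k : ℝ) = α * n) (ℓ : Fin n → ℝ)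
    (σ : Equiv.Perm (Fin n))
    (hσ : ∀ i j : Fin n, i ≤ j → ℓ (σ j) ≤ ℓ (σ i)) :
    ((1 : ℝ) / k) * (∑ i ∈ Finset.univ.filter (fun i : Fin n => (i : ℕ) < k), ℓ (σ i))
        = sInf {x : ℝ | ∃ η : ℝ, x = η + (1 / (α * n)) * ∑ i, max (ℓ i - η) 0} ∧
    ((1 : ℝ) / k) * (∑ i ∈ Finset.univ.filter (fun i : Fin n => (i : ℕ) < k), ℓ (σ i))
        = ℓ (σ ⟨k - 1, by omega⟩)
          + (1 / (α * n)) * ∑ i, max (ℓ i - ℓ (σ ⟨k - 1, by omega⟩)) 0 := by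
  set s : Finset (Fin n) := {i | (i : ℕ) < k}
  have hcard : #s = k := by rw [Fin.card_filter_val_lt, min_eq_right hkn]
  have hs (i) (hi : i ∈ s) : ℓ (σ ⟨k - 1, by omega⟩) ≤ ℓ (σ i) :=
    hσ _ _ (Fin.le_def.2 (Nat.le_sub_one_of_lt (mem_filter.1 hi).2))
  have hsc (i) (hi : i ∉ s) : ℓ (σ i) ≤ ℓ (σ ⟨k - 1, by omega⟩) :=
    hσ _ _ (Fin.le_def.2 ((Nat.sub_le k 1).trans (not_lt.1 fun h => hi (by simpa [s] using h))))
  have hperm (η : ℝ) : ∑ i, max (ℓ (σ i) - η) 0 = ∑ i, max (ℓ i - η) 0 :=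
    Equiv.sum_comp σ fun i => max (ℓ i - η) 0
  have hleast := isLeast_mean_of_separates hcard hk hs hsc
  have hattained := mean_eq_add_sum_max_sub_zero_of_separates hcard hk hs hsc
  simp only [hperm] at hleast hattained
  rw [← hαk]
  exact ⟨hleast.csInf_eq.symm, hattained⟩
end

section
/- Let f : [0,1] → [0,1] and let P, Q be probability measures on a finite set with TV(P,Q) ≤ δ, and let α ∈ (0,1]. Then |CVaR_α(f;P) − CVaR_α(f;Q)| ≤ δ/α, where CVaR_α(f;P) = inf_{η∈ℝ} ( α⁻¹ 𝔼_P[(f − η)₊] + η ). -/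
/-!
For a fixed threshold `η` the Rockafellar–Uryasev objective depends on the distribution only
through the expectation of `(f - η)₊`. Since `f` takes values in `[0,1]`, the function
`(f - η)₊ - (-η)₊` takes values in `[0,1]` as well, and subtracting the constant `(-η)₊` does not
change the difference of the expectations under `P` and `Q`. An expectation of a `[0,1]`-valued
function moves by at most the total variation distance, so the objectives under `P` and `Q` are
uniformly `δ/α`-close, and hence so are their infima.
-/

open Finset Set

section TotalVariation

variable {S : Type*} [Fintype S] {P Q : S → ℝ} {δ : ℝ} {h : S → ℝ}

theorem sum_sub_mul_le_of_forall_abs_sum_sub_le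
    (hTV : ∀ A : Finset S, |∑ s ∈ A, P s - ∑ s ∈ A, Q s| ≤ δ)
    (h0 : ∀ s, 0 ≤ h s) (h1 : ∀ s, h s ≤ 1) :
    ∑ s, (P s - Q s) * h s ≤ δ := by
  classical
  set A := univ.filter fun s => Q s ≤ P s
  calc ∑ s, (P s - Q s) * h s
      ≤ ∑ s, if Q s ≤ P s then P s - Q s else 0 := by
        refine Finset.sum_le_sum fun s _ => ?_
        split_ifs with hQP
        · nlinarith [h0 s, h1 s]
        · nlinarith [h0 s]
    _ = ∑ s ∈ A, P s - ∑ s ∈ A, Q s := by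
        rw [← Finset.sum_filter, Finset.sum_sub_distrib]
    _ ≤ δ := (le_abs_self _).trans (hTV _)

theorem abs_sum_sub_mul_le_of_forall_abs_sum_sub_le
    (hTV : ∀ A : Finset S, |∑ s ∈ A, P s - ∑ s ∈ A, Q s| ≤ δ)
    (h0 : ∀ s, 0 ≤ h s) (h1 : ∀ s, h s ≤ 1) :
    |∑ s, (P s - Q s) * h s| ≤ δ := by
  have hTV' : ∀ A : Finset S, |∑ s ∈ A, Q s - ∑ s ∈ A, P s| ≤ δ := fun A => by
    rw [abs_sub_comm]; exact hTV A
  have hswap : ∑ s, (Q s - P s) * h s = -∑ s, (P s - Q s) * h s := by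
    rw [← Finset.sum_neg_distrib]; exact Finset.sum_congr rfl fun s _ => by ring
  have hlower := sum_sub_mul_le_of_forall_abs_sum_sub_le hTV' h0 h1
  rw [hswap] at hlower
  exact abs_le.mpr ⟨by linarith, sum_sub_mul_le_of_forall_abs_sum_sub_le hTV h0 h1⟩

end TotalVariation

theorem abs_ciInf_sub_ciInf_le {ι : Type*} [Nonempty ι] {g h : ι → ℝ} {c : ℝ}
    (hg : BddBelow (range g)) (hh : BddBelow (range h)) (hgh : ∀ i, |g i - h i| ≤ c) :
    |(⨅ i, g i) - ⨅ i, h i| ≤ c := by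
  have ciInf_le_add {u v : ι → ℝ} (hu : BddBelow (range u)) (huv : ∀ i, u i ≤ v i + c) :
      ⨅ i, u i ≤ (⨅ i, v i) + c :=
    sub_le_iff_le_add.mp <| le_ciInf fun i =>
      sub_le_iff_le_add.mpr <| (ciInf_le hu i).trans (huv i)
  refine abs_sub_le_iff.mpr ⟨?_, ?_⟩
  · have := ciInf_le_add (v := h) hg fun i => by linarith [(abs_le.mp (hgh i)).2]
    linarith
  · have := ciInf_le_add (v := g) hh fun i => by linarith [(abs_le.mp (hgh i)).1]
    linarith

section RockafellarUryasev

variable {S : Type*} [Fintype S]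

noncomputable def ruObjective (α : ℝ) (f P : S → ℝ) (η : ℝ) : ℝ :=
  η + (1 / α) * ∑ s, P s * max (f s - η) 0

theorem max_sub_zero_sub_max_neg_zero_mem_Icc {x : ℝ} (hx : x ∈ Icc (0 : ℝ) 1) (η : ℝ) :
    max (x - η) 0 - max (-η) 0 ∈ Icc (0 : ℝ) 1 := by
  refine ⟨sub_nonneg.mpr (max_le_max (by linarith [hx.1]) le_rfl), ?_⟩
  have hLip := abs_max_sub_max_le_abs (x - η) (-η) 0
  rw [sub_neg_eq_add, sub_add_cancel, abs_of_nonneg hx.1] at hLip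
  exact (le_abs_self _).trans (hLip.trans hx.2)

/- For `α > 1` the objective tends to `-∞` as `η → -∞`, and the `sInf` in the theorem would be
the junk value `0`; `α ≤ 1` is what makes the infimum a genuine one. -/
theorem ruObjective_nonneg {α : ℝ} {f P : S → ℝ} (hα : 0 < α) (hα1 : α ≤ 1)
    (hf : ∀ s, 0 ≤ f s) (hP : ∀ s, 0 ≤ P s) (hPsum : ∑ s, P s = 1) (η : ℝ) :
    0 ≤ ruObjective α f P η := by
  set E := ∑ s, P s * max (f s - η) 0
  have hE : 0 ≤ E := Finset.sum_nonneg fun s _ => mul_nonneg (hP s) (le_max_right _ _)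
  have hEη : -η ≤ E :=
    calc -η = ∑ s, P s * -η := by rw [← Finset.sum_mul, hPsum, one_mul]
      _ ≤ E := Finset.sum_le_sum fun s _ =>
        mul_le_mul_of_nonneg_left (le_max_of_le_left (by linarith [hf s])) (hP s)
  have : E ≤ (1 / α) * E := le_mul_of_one_le_left hE (one_le_one_div hα hα1)
  unfold ruObjective
  linarith

theorem abs_ruObjective_sub_le {α δ : ℝ} {f P Q : S → ℝ} (hα : 0 < α)
    (hf : ∀ s, f s ∈ Icc (0 : ℝ) 1) (hsum : ∑ s, P s = ∑ s, Q s)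
    (hTV : ∀ A : Finset S, |∑ s ∈ A, P s - ∑ s ∈ A, Q s| ≤ δ) (η : ℝ) :
    |ruObjective α f P η - ruObjective α f Q η| ≤ δ / α := by
  set h : S → ℝ := fun s => max (f s - η) 0 - max (-η) 0
  have hdiff : ruObjective α f P η - ruObjective α f Q η = (1 / α) * ∑ s, (P s - Q s) * h s := by
    simp only [ruObjective, h, mul_sub, sub_mul, Finset.sum_sub_distrib, ← Finset.sum_mul, hsum]
    ring
  have hh s : h s ∈ Icc (0 : ℝ) 1 := max_sub_zero_sub_max_neg_zero_mem_Icc (hf s) η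
  rw [hdiff, abs_mul, abs_of_pos (one_div_pos.mpr hα), one_div, div_eq_inv_mul]
  exact mul_le_mul_of_nonneg_left
    (abs_sum_sub_mul_le_of_forall_abs_sum_sub_le hTV (fun s => (hh s).1) fun s => (hh s).2)
    (inv_nonneg.mpr hα.le)

end RockafellarUryasev

theorem stmt_18_general {S : Type*} [Fintype S]
    (f : S → ℝ) (hf : ∀ s, f s ∈ Set.Icc (0 : ℝ) 1)
    (P Q : S → ℝ)
    (hPpos : ∀ s, 0 ≤ P s) (hPsum : (∑ s, P s) = 1)
    (hQpos : ∀ s, 0 ≤ Q s) (hQsum : (∑ s, Q s) = 1)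
    (δ : ℝ)
    (hTV : ∀ A : Finset S, |(∑ s ∈ A, P s) - (∑ s ∈ A, Q s)| ≤ δ)
    (α : ℝ) (hα : 0 < α ∧ α ≤ 1) :
    |sInf {x : ℝ | ∃ η : ℝ, x = η + (1 / α) * ∑ s, P s * max (f s - η) 0}
      - sInf {x : ℝ | ∃ η : ℝ, x = η + (1 / α) * ∑ s, Q s * max (f s - η) 0}| ≤ δ / α := by
  obtain ⟨hα0, hα1⟩ := hα
  have hrange (R : S → ℝ) : {x : ℝ | ∃ η : ℝ, x = η + (1 / α) * ∑ s, R s * max (f s - η) 0}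
      = range (ruObjective α f R) :=
    Set.ext fun _ => exists_congr fun _ => eq_comm
  have hbdd {R : S → ℝ} (hR : ∀ s, 0 ≤ R s) (hRsum : ∑ s, R s = 1) :
      BddBelow (range (ruObjective α f R)) :=
    ⟨0, forall_mem_range.mpr (ruObjective_nonneg hα0 hα1 (fun s => (hf s).1) hR hRsum)⟩
  rw [hrange P, hrange Q]
  exact abs_ciInf_sub_ciInf_le (hbdd hPpos hPsum) (hbdd hQpos hQsum)
    (abs_ruObjective_sub_le hα0 hf (hPsum.trans hQsum.symm) hTV)

/-- CVaR stability in total variation: for `f : S → [0,1]` and probability vectors `P, Q`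
with `TV(P,Q) ≤ δ`, the Rockafellar–Uryasev CVaR values differ by at most `δ/α`. -/
theorem stmt_18 {S : Type*} [Fintype S] [Nonempty S]
    (f : S → ℝ) (hf : ∀ s, f s ∈ Set.Icc (0 : ℝ) 1)
    (P Q : S → ℝ)
    (hPpos : ∀ s, 0 ≤ P s) (hPsum : (∑ s, P s) = 1)
    (hQpos : ∀ s, 0 ≤ Q s) (hQsum : (∑ s, Q s) = 1)
    (δ : ℝ) (hδ : 0 ≤ δ)
    (hTV : ∀ A : Finset S, |(∑ s ∈ A, P s) - (∑ s ∈ A, Q s)| ≤ δ)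
    (α : ℝ) (hα : 0 < α ∧ α ≤ 1) :
    |sInf {x : ℝ | ∃ η : ℝ, x = η + (1 / α) * ∑ s, P s * max (f s - η) 0}
      - sInf {x : ℝ | ∃ η : ℝ, x = η + (1 / α) * ∑ s, Q s * max (f s - η) 0}| ≤ δ / α :=
  stmt_18_general f hf P Q hPpos hPsum hQpos hQsum δ hTV α hα
end
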